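/- Suppose counterfactual conditional hazards satisfy: (i) the Y-hazard at each time s given covariate history l̄_s depends only on a_Y and not a_D, (ii) the D-hazard depends only on a_D and not a_Y, (iii) the conditional law of L_{A_Y,j} given (l̄_{j-1}, l_{A_D,j}) depends only on a_Y, and (iv) the conditional law of L_{A_D,j} given l̄_{j-1} depends only on a_D. Then the counterfactual cumulative incidence Pr(Y^{a_Y,a_D}_{K+1}=1), expressed via the factorization Σ_{l̄_K} Σ_{s=0}^{K} [Y-hazard at s under (a_Y,a_D)] · Π_{j=0}^s [D-survival × Y-survival × L_{A_Y}-density × L_{A_D}-density under (a_Y,a_D)], equals the same expression with each factor evaluated at the single-arm counterfactual a = a_Y or a = a_D respectively (equation (18) of the paper). -/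

import Mathlib

open MeasureTheory

noncomputable def pr {Ω : Type*} [MeasurableSpace Ω] (μ : Measure Ω) (s : Set Ω) : ℝ :=
  (μ s).toReal

noncomputable def cpr {Ω : Type*} [MeasurableSpace Ω] (μ : Measure Ω) (s t : Set Ω) : ℝ :=
  pr μ (s ∩ t) / pr μ t

/-- Extend a finite covariate history `l̄_n : Fin (n+1) → γ` to all of `ℕ`. -/
def extH {γ : Type*} (n : ℕ) (f : Fin (n + 1) → γ) : ℕ → γ :=
  fun j => f ⟨j % (n + 1), Nat.mod_lt j (Nat.succ_pos n)⟩

/-- The event `L̄_{j-1} = l̄_{j-1}` for the partitioned covariates `L_i = (L_{A_Y,i}, L_{A_D,i})`: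
`L_{A_Y,i} = lY_i` and `L_{A_D,i} = lD_i` for all `i < j`. -/
def covHist {Ω α β : Type*} (LY : ℕ → Ω → α) (LD : ℕ → Ω → β)
    (lY : ℕ → α) (lD : ℕ → β) (j : ℕ) : Set Ω :=
  {ω | ∀ i < j, LY i ω = lY i ∧ LD i ω = lD i}

/-- Y-hazard at `s`: `Pr(Y_{s+1}=1 | D_{s+1}=Y_s=0, L̄_s=l̄_s)`. -/
noncomputable def YhazF {Ω α β : Type*} [MeasurableSpace Ω] (μ : Measure Ω)
    (Y D : ℕ → Ω → Bool) (LY : ℕ → Ω → α) (LD : ℕ → Ω → β)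
    (lY : ℕ → α) (lD : ℕ → β) (s : ℕ) : ℝ :=
  cpr μ {ω | Y (s + 1) ω = true}
    ({ω | D (s + 1) ω = false} ∩ {ω | Y s ω = false} ∩ covHist LY LD lY lD (s + 1))

/-- D-survival at `j`: `Pr(D_{j+1}=0 | D_j=Y_j=0, L̄_j=l̄_j)`. -/
noncomputable def DsurvF {Ω α β : Type*} [MeasurableSpace Ω] (μ : Measure Ω)
    (Y D : ℕ → Ω → Bool) (LY : ℕ → Ω → α) (LD : ℕ → Ω → β)
    (lY : ℕ → α) (lD : ℕ → β) (j : ℕ) : ℝ :=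
  cpr μ {ω | D (j + 1) ω = false}
    ({ω | D j ω = false} ∩ {ω | Y j ω = false} ∩ covHist LY LD lY lD (j + 1))

/-- Y-survival at `j`: `Pr(Y_j=0 | D_j=Y_{j-1}=0, L̄_{j-1}=l̄_{j-1})` (with `Y_{-1} := 0`,
realized by truncated subtraction since `Y_0 ≡ 0`). -/
noncomputable def YsurvF {Ω α β : Type*} [MeasurableSpace Ω] (μ : Measure Ω)
    (Y D : ℕ → Ω → Bool) (LY : ℕ → Ω → α) (LD : ℕ → Ω → β)
    (lY : ℕ → α) (lD : ℕ → β) (j : ℕ) : ℝ :=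
  cpr μ {ω | Y j ω = false}
    ({ω | D j ω = false} ∩ {ω | Y (j - 1) ω = false} ∩ covHist LY LD lY lD j)

/-- `L_{A_Y}`-density at `j`: `Pr(L_{A_Y,j}=l_{A_Y,j} | Y_j=D_j=0, L̄_{j-1}=l̄_{j-1}, L_{A_D,j}=l_{A_D,j})`. -/
noncomputable def LYdensF {Ω α β : Type*} [MeasurableSpace Ω] (μ : Measure Ω)
    (Y D : ℕ → Ω → Bool) (LY : ℕ → Ω → α) (LD : ℕ → Ω → β)
    (lY : ℕ → α) (lD : ℕ → β) (j : ℕ) : ℝ :=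
  cpr μ {ω | LY j ω = lY j}
    ({ω | Y j ω = false} ∩ {ω | D j ω = false} ∩ covHist LY LD lY lD j ∩
      {ω | LD j ω = lD j})

/-- `L_{A_D}`-density at `j`: `Pr(L_{A_D,j}=l_{A_D,j} | Y_j=D_j=0, L̄_{j-1}=l̄_{j-1})`. -/
noncomputable def LDdensF {Ω α β : Type*} [MeasurableSpace Ω] (μ : Measure Ω)
    (Y D : ℕ → Ω → Bool) (LY : ℕ → Ω → α) (LD : ℕ → Ω → β)
    (lY : ℕ → α) (lD : ℕ → β) (j : ℕ) : ℝ :=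
  cpr μ {ω | LD j ω = lD j}
    ({ω | Y j ω = false} ∩ {ω | D j ω = false} ∩ covHist LY LD lY lD j)

/-- The g-formula factorization `Σ_{s=0}^K Σ_{l̄_s} [Y-hazard at s] · Π_{j=0}^s
[D-survival × Y-survival × L_{A_Y}-density × L_{A_D}-density]`, where the Y-hazard,
Y-survival and `L_{A_Y}`-density factors are conditional probabilities in one
counterfactual world (processes `Y₁, D₁, LY₁, LD₁`) and the D-survival and
`L_{A_D}`-density factors in another (`Y₂, D₂, LY₂, LD₂`). -/
noncomputable def gExpr {Ω α β : Type*} [MeasurableSpace Ω] [Fintype α] [Fintype β]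
    (μ : Measure Ω) (K : ℕ)
    (Y1 D1 : ℕ → Ω → Bool) (LY1 : ℕ → Ω → α) (LD1 : ℕ → Ω → β)
    (Y2 D2 : ℕ → Ω → Bool) (LY2 : ℕ → Ω → α) (LD2 : ℕ → Ω → β) : ℝ :=
  ∑ s ∈ Finset.range (K + 1),
    ∑ l : Fin (s + 1) → α × β,
      YhazF μ Y1 D1 LY1 LD1 (fun i => (extH s l i).1) (fun i => (extH s l i).2) s *
        ∏ j ∈ Finset.range (s + 1),
          (DsurvF μ Y2 D2 LY2 LD2 (fun i => (extH s l i).1) (fun i => (extH s l i).2) j *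
            YsurvF μ Y1 D1 LY1 LD1 (fun i => (extH s l i).1) (fun i => (extH s l i).2) j *
            LYdensF μ Y1 D1 LY1 LD1 (fun i => (extH s l i).1) (fun i => (extH s l i).2) j *
            LDdensF μ Y2 D2 LY2 LD2 (fun i => (extH s l i).1) (fun i => (extH s l i).2) j)

/-!
In one counterfactual world the g-formula is an identity. The event `Y_{K+1} = 1` splits by the
time `s + 1` at which the event first occurs and by the covariate history `l̄_s`. Since the
competing event precludes the event of interest, `D_{s+1} = 0` on each such cell, so the cell has
probability `YhazF s · Pr(D_{s+1} = Y_s = 0, L̄_s = l̄_s)`, and this risk-set probability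
telescopes into the product of the survival and covariate factors. Exchanging worlds is then done
factor by factor with (i)–(iv).
-/

open Set Finset

section Probability

variable {Ω : Type*} [MeasurableSpace Ω] {μ : Measure Ω}

lemma pr_eq_measureReal (s : Set Ω) : pr μ s = μ.real s := rfl

lemma cpr_mul_pr {s t : Set Ω} (ht : pr μ t ≠ 0) : cpr μ s t * pr μ t = pr μ (s ∩ t) :=
  div_mul_cancel₀ _ ht

lemma pr_eq_sum_inter_fiber [IsFiniteMeasure μ] {ι : Type*} [Fintype ι] (X : Ω → ι)
    (hX : ∀ i, MeasurableSet (X ⁻¹' {i})) (A : Set Ω) :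
    pr μ A = ∑ i, pr μ (A ∩ X ⁻¹' {i}) := by
  simp only [pr_eq_measureReal, inter_comm A, ← measureReal_restrict_apply (hX _)]
  rw [sum_measureReal_preimage_singleton _ fun i _ => hX i, coe_univ, preimage_univ,
    measureReal_restrict_apply MeasurableSet.univ, univ_inter]

end Probability

section CountingProcess

variable {Ω : Type*} {Y : ℕ → Ω → Bool}

lemma eq_false_of_succ_eq_false (hY : ∀ n ω, Y n ω = true → Y (n + 1) ω = true)
    {n : ℕ} {ω : Ω} (h : Y (n + 1) ω = false) : Y n ω = false :=
  Bool.eq_false_iff.2 fun hn => by simp [hY n ω hn] at h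

lemma eq_false_pred_of_eq_false (hY : ∀ n ω, Y n ω = true → Y (n + 1) ω = true)
    {n : ℕ} {ω : Ω} (h : Y n ω = false) : Y (n - 1) ω = false := by
  cases n with
  | zero => exact h
  | succ n => exact eq_false_of_succ_eq_false hY h

lemma pr_eq_sum_first_hit [MeasurableSpace Ω] {μ : Measure Ω} [IsFiniteMeasure μ]
    (hm : ∀ n, MeasurableSet {ω | Y n ω = true}) (hY0 : ∀ ω, Y 0 ω = false)
    (hY : ∀ n ω, Y n ω = true → Y (n + 1) ω = true) (K : ℕ) :
    pr μ {ω | Y K ω = true} =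
      ∑ s ∈ range K, pr μ ({ω | Y (s + 1) ω = true} ∩ {ω | Y s ω = false}) := by
  induction K with
  | zero => simp [pr_eq_measureReal, hY0]
  | succ K ih =>
    have hprev : {ω | Y (K + 1) ω = true} ∩ {ω | Y K ω = true} = {ω | Y K ω = true} :=
      inter_eq_right.2 fun ω => hY K ω
    have hnew : {ω | Y (K + 1) ω = true} \ {ω | Y K ω = true} =
        {ω | Y (K + 1) ω = true} ∩ {ω | Y K ω = false} := by
      ext ω; simp
    rw [sum_range_succ, ← ih, pr_eq_measureReal, ← measureReal_inter_add_sdiff (hm K), hprev,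
      hnew]
    rfl

end CountingProcess

section RiskSet

variable {Ω α β : Type*} (Y D : ℕ → Ω → Bool) (LY : ℕ → Ω → α) (LD : ℕ → Ω → β)
  (lY : ℕ → α) (lD : ℕ → β)

/-- `{D_j = 0, Y_{j-1} = 0, L̄_{j-1} = l̄_{j-1}}`, the conditioning event of the Y-survival
factor; at `j + 1` it is the conditioning event of the Y-hazard at `j`. -/
def riskSet (j : ℕ) : Set Ω :=
  {ω | D j ω = false} ∩ {ω | Y (j - 1) ω = false} ∩ covHist LY LD lY lD j

lemma YsurvF_eq_cpr_riskSet [MeasurableSpace Ω] (μ : Measure Ω) (j : ℕ) :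
    YsurvF μ Y D LY LD lY lD j = cpr μ {ω | Y j ω = false} (riskSet Y D LY LD lY lD j) :=
  rfl

lemma YhazF_eq_cpr_riskSet [MeasurableSpace Ω] (μ : Measure Ω) (s : ℕ) :
    YhazF μ Y D LY LD lY lD s =
      cpr μ {ω | Y (s + 1) ω = true} (riskSet Y D LY LD lY lD (s + 1)) :=
  rfl

lemma riskSet_zero (hY0 : ∀ ω, Y 0 ω = false) (hD0 : ∀ ω, D 0 ω = false) :
    riskSet Y D LY LD lY lD 0 = univ := by
  ext ω; simp [riskSet, covHist, hY0, hD0]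

lemma mem_covHist_succ {j : ℕ} {ω : Ω} :
    ω ∈ covHist LY LD lY lD (j + 1) ↔
      ω ∈ covHist LY LD lY lD j ∧ LY j ω = lY j ∧ LD j ω = lD j := by
  simp only [covHist, mem_ofPred_eq, Nat.lt_succ_iff_lt_or_eq, or_imp, forall_and, forall_eq]
  tauto

lemma measurableSet_covHist [MeasurableSpace Ω] (hLY : ∀ n x, MeasurableSet {ω | LY n ω = x})
    (hLD : ∀ n x, MeasurableSet {ω | LD n ω = x}) (j : ℕ) :
    MeasurableSet (covHist LY LD lY lD j) := by
  have : covHist LY LD lY lD j = ⋂ i ∈ range j, {ω | LY i ω = lY i} ∩ {ω | LD i ω = lD i} := by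
    ext ω; simp [covHist]
  rw [this]
  exact Finset.measurableSet_biInter _ fun i _ => (hLY i _).inter (hLD i _)

lemma covHist_extH_eq_preimage (n : ℕ) (l : Fin (n + 1) → α × β) :
    covHist LY LD (fun i => (extH n l i).1) (fun i => (extH n l i).2) (n + 1) =
      (fun ω (k : Fin (n + 1)) => (LY k ω, LD k ω)) ⁻¹' {l} := by
  ext ω
  simp only [covHist, mem_ofPred_eq, Set.mem_preimage, mem_singleton_iff, funext_iff,
    Prod.ext_iff, Fin.forall_iff]
  refine forall₂_congr fun i hi => ?_
  simp only [extH, Nat.mod_eq_of_lt hi]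

end RiskSet

section Factorization

variable {Ω α β : Type*} [MeasurableSpace Ω] {μ : Measure Ω}
  {Y D : ℕ → Ω → Bool} {LY : ℕ → Ω → α} {LD : ℕ → Ω → β} {lY : ℕ → α} {lD : ℕ → β}

lemma pr_riskSet_mul_survival_factors [IsFiniteMeasure μ]
    (hY : ∀ n ω, Y n ω = true → Y (n + 1) ω = true)
    (hD : ∀ n ω, D n ω = true → D (n + 1) ω = true)
    {j : ℕ} (hpos : 0 < μ (riskSet Y D LY LD lY lD (j + 1))) :
    pr μ (riskSet Y D LY LD lY lD j) *
        (DsurvF μ Y D LY LD lY lD j * YsurvF μ Y D LY LD lY lD j *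
          LYdensF μ Y D LY LD lY lD j * LDdensF μ Y D LY LD lY lD j) =
      pr μ (riskSet Y D LY LD lY lD (j + 1)) := by
  rw [YsurvF_eq_cpr_riskSet]
  simp only [DsurvF, LYdensF, LDdensF, cpr]
  -- The four factors are ratios of consecutive events in the decreasing chain
  -- `riskSet j ⊇ F ⊇ E ⊇ C ⊇ riskSet (j + 1)`, so their product telescopes.
  set F := {ω | Y j ω = false} ∩ {ω | D j ω = false} ∩ covHist LY LD lY lD j
  set E := F ∩ {ω | LD j ω = lD j}
  set C := {ω | D j ω = false} ∩ {ω | Y j ω = false} ∩ covHist LY LD lY lD (j + 1)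
  have hF : {ω | Y j ω = false} ∩ riskSet Y D LY LD lY lD j = F := by
    ext ω
    simp only [F, riskSet, mem_inter_iff, mem_ofPred_eq]
    have := eq_false_pred_of_eq_false hY (n := j) (ω := ω)
    tauto
  have hE : {ω | LD j ω = lD j} ∩ F = E := inter_comm _ _
  have hC : {ω | LY j ω = lY j} ∩ E = C := by
    ext ω
    simp only [E, F, C, mem_inter_iff, mem_ofPred_eq, mem_covHist_succ]
    tauto
  have hH : {ω | D (j + 1) ω = false} ∩ C = riskSet Y D LY LD lY lD (j + 1) := by
    ext ω
    simp only [C, riskSet, mem_inter_iff, mem_ofPred_eq, Nat.add_sub_cancel]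
    have := eq_false_of_succ_eq_false hD (n := j) (ω := ω)
    tauto
  have hposC : 0 < pr μ C := by
    rw [← hH] at hpos
    exact (ENNReal.toReal_pos hpos.ne' (measure_ne_top μ _)).trans_le
      (measureReal_mono inter_subset_right)
  have hposE : 0 < pr μ E := hposC.trans_le (hC ▸ measureReal_mono inter_subset_right)
  have hposF : 0 < pr μ F := hposE.trans_le (hE ▸ measureReal_mono inter_subset_right)
  have hposH : 0 < pr μ (riskSet Y D LY LD lY lD j) :=
    hposF.trans_le (hF ▸ measureReal_mono inter_subset_right)
  rw [hF, hE, hC, hH]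
  field_simp

lemma prod_survival_factors [IsProbabilityMeasure μ] (hY0 : ∀ ω, Y 0 ω = false)
    (hD0 : ∀ ω, D 0 ω = false) (hY : ∀ n ω, Y n ω = true → Y (n + 1) ω = true)
    (hD : ∀ n ω, D n ω = true → D (n + 1) ω = true) {n : ℕ}
    (hpos : ∀ j < n, 0 < μ (riskSet Y D LY LD lY lD (j + 1))) :
    ∏ j ∈ range n, (DsurvF μ Y D LY LD lY lD j * YsurvF μ Y D LY LD lY lD j *
        LYdensF μ Y D LY LD lY lD j * LDdensF μ Y D LY LD lY lD j) =
      pr μ (riskSet Y D LY LD lY lD n) := by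
  induction n with
  | zero => simp [riskSet_zero Y D LY LD lY lD hY0 hD0, pr_eq_measureReal]
  | succ n ih =>
    rw [prod_range_succ, ih fun j hj => hpos j (Nat.lt_succ_of_lt hj),
      pr_riskSet_mul_survival_factors hY hD (hpos n n.lt_succ_self)]

lemma YsurvF_zero [IsProbabilityMeasure μ] (hY0 : ∀ ω, Y 0 ω = false)
    (hD0 : ∀ ω, D 0 ω = false) : YsurvF μ Y D LY LD lY lD 0 = 1 := by
  have hsurv : {ω | Y 0 ω = false} = univ := eq_univ_of_forall hY0
  simp [YsurvF_eq_cpr_riskSet, riskSet_zero Y D LY LD lY lD hY0 hD0, cpr, hsurv,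
    pr_eq_measureReal]

lemma YsurvF_succ [IsFiniteMeasure μ] {j : ℕ} (hm : MeasurableSet {ω | Y (j + 1) ω = true})
    (hpos : 0 < μ (riskSet Y D LY LD lY lD (j + 1))) :
    YsurvF μ Y D LY LD lY lD (j + 1) = 1 - YhazF μ Y D LY LD lY lD j := by
  rw [YsurvF_eq_cpr_riskSet, YhazF_eq_cpr_riskSet, cpr, cpr]
  set H := riskSet Y D LY LD lY lD (j + 1)
  have hsurv : {ω | Y (j + 1) ω = false} ∩ H = H \ {ω | Y (j + 1) ω = true} := by
    ext ω; simp [and_comm]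
  have hsplit := measureReal_inter_add_sdiff (μ := μ) (s := H) hm
  have hposH : 0 < pr μ H := ENNReal.toReal_pos hpos.ne' (measure_ne_top μ _)
  rw [hsurv, inter_comm _ H]
  simp only [pr_eq_measureReal] at hposH ⊢
  field_simp
  linarith

end Factorization

section GFormula

variable {Ω α β : Type*} [MeasurableSpace Ω] {μ : Measure Ω}
  {Y D : ℕ → Ω → Bool} {LY : ℕ → Ω → α} {LD : ℕ → Ω → β}

lemma YhazF_mul_pr_riskSet [IsFiniteMeasure μ]
    (hcomp : ∀ n ω, D (n + 1) ω = true → Y n ω = false → Y (n + 1) ω = false)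
    (lY : ℕ → α) (lD : ℕ → β) (s : ℕ) (hpos : 0 < μ (riskSet Y D LY LD lY lD (s + 1))) :
    YhazF μ Y D LY LD lY lD s * pr μ (riskSet Y D LY LD lY lD (s + 1)) =
      pr μ ({ω | Y (s + 1) ω = true} ∩ {ω | Y s ω = false} ∩ covHist LY LD lY lD (s + 1)) := by
  have hcase : {ω | Y (s + 1) ω = true} ∩ riskSet Y D LY LD lY lD (s + 1) =
      {ω | Y (s + 1) ω = true} ∩ {ω | Y s ω = false} ∩ covHist LY LD lY lD (s + 1) := by
    ext ω
    simp only [riskSet, mem_inter_iff, mem_ofPred_eq, Nat.add_sub_cancel]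
    constructor
    · rintro ⟨hnew, ⟨-, hprev⟩, hcov⟩
      exact ⟨⟨hnew, hprev⟩, hcov⟩
    · rintro ⟨⟨hnew, hprev⟩, hcov⟩
      refine ⟨hnew, ⟨Bool.eq_false_iff.2 fun hD => ?_, hprev⟩, hcov⟩
      simp [hcomp s ω hD hprev] at hnew
  rw [YhazF_eq_cpr_riskSet, cpr_mul_pr (ENNReal.toReal_pos hpos.ne' (measure_ne_top μ _)).ne',
    hcase]

theorem pr_eq_gExpr [Fintype α] [Fintype β] [IsProbabilityMeasure μ] (K : ℕ)
    (hmY : ∀ n, MeasurableSet {ω | Y n ω = true})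
    (hmLY : ∀ n x, MeasurableSet {ω | LY n ω = x})
    (hmLD : ∀ n x, MeasurableSet {ω | LD n ω = x})
    (hY0 : ∀ ω, Y 0 ω = false) (hD0 : ∀ ω, D 0 ω = false)
    (hY : ∀ n ω, Y n ω = true → Y (n + 1) ω = true)
    (hD : ∀ n ω, D n ω = true → D (n + 1) ω = true)
    (hcomp : ∀ n ω, D (n + 1) ω = true → Y n ω = false → Y (n + 1) ω = false)
    (hpos : ∀ (lY : ℕ → α) (lD : ℕ → β) (j : ℕ), j ≤ K →
      0 < μ (riskSet Y D LY LD lY lD (j + 1))) :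
    pr μ {ω | Y (K + 1) ω = true} = gExpr μ K Y D LY LD Y D LY LD := by
  rw [pr_eq_sum_first_hit hmY hY0 hY, gExpr]
  refine sum_congr rfl fun s hs => ?_
  have hsK : s ≤ K := Nat.lt_succ_iff.1 (Finset.mem_range.1 hs)
  have hfiber (l : Fin (s + 1) → α × β) :
      MeasurableSet ((fun ω (k : Fin (s + 1)) => (LY k ω, LD k ω)) ⁻¹' {l}) := by
    rw [← covHist_extH_eq_preimage]
    exact measurableSet_covHist LY LD _ _ hmLY hmLD _
  rw [pr_eq_sum_inter_fiber _ hfiber]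
  refine sum_congr rfl fun l _ => ?_
  rw [← covHist_extH_eq_preimage, ← YhazF_mul_pr_riskSet hcomp _ _ s (hpos _ _ s hsK),
    prod_survival_factors hY0 hD0 hY hD fun j hj => hpos _ _ j (by omega)]

end GFormula

theorem separable_effects_factor_swap_general
    {Ω α β : Type*} [MeasurableSpace Ω] [Fintype α] [Fintype β]
    (μ : Measure Ω) [IsProbabilityMeasure μ] (K : ℕ)
    (Yc Dc : Bool → Bool → ℕ → Ω → Bool)
    (LYc : Bool → Bool → ℕ → Ω → α) (LDc : Bool → Bool → ℕ → Ω → β)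
    (hmY : ∀ u v n, MeasurableSet {ω | Yc u v n ω = true})
    (hmLY : ∀ u v n x, MeasurableSet {ω | LYc u v n ω = x})
    (hmLD : ∀ u v n x, MeasurableSet {ω | LDc u v n ω = x})
    (hY0 : ∀ u v ω, Yc u v 0 ω = false)
    (hD0 : ∀ u v ω, Dc u v 0 ω = false)
    (hYabs : ∀ u v n ω, Yc u v n ω = true → Yc u v (n + 1) ω = true)
    (hDabs : ∀ u v n ω, Dc u v n ω = true → Dc u v (n + 1) ω = true)
    (hcomp : ∀ u v n ω, Dc u v (n + 1) ω = true → Yc u v n ω = false →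
      ∀ j, n < j → Yc u v j ω = false)
    -- all conditioning events have positive probability
    (hpos : ∀ (u v : Bool) (lY : ℕ → α) (lD : ℕ → β) (j : ℕ), j ≤ K →
      0 < μ ({ω | Dc u v (j + 1) ω = false} ∩ {ω | Yc u v j ω = false} ∩
        covHist (LYc u v) (LDc u v) lY lD (j + 1)))
    -- (i) the Y-hazard depends only on a_Y and not a_D
    (hYhaz : ∀ (u v v' : Bool) (lY : ℕ → α) (lD : ℕ → β) (s : ℕ),
      YhazF μ (Yc u v) (Dc u v) (LYc u v) (LDc u v) lY lD s =
        YhazF μ (Yc u v') (Dc u v') (LYc u v') (LDc u v') lY lD s)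
    -- (ii) the D-hazard depends only on a_D and not a_Y
    (hDsurv : ∀ (u u' v : Bool) (lY : ℕ → α) (lD : ℕ → β) (j : ℕ),
      DsurvF μ (Yc u v) (Dc u v) (LYc u v) (LDc u v) lY lD j =
        DsurvF μ (Yc u' v) (Dc u' v) (LYc u' v) (LDc u' v) lY lD j)
    -- (iii) the conditional law of L_{A_Y,j} depends only on a_Y
    (hLYdens : ∀ (u v v' : Bool) (lY : ℕ → α) (lD : ℕ → β) (j : ℕ),
      LYdensF μ (Yc u v) (Dc u v) (LYc u v) (LDc u v) lY lD j =
        LYdensF μ (Yc u v') (Dc u v') (LYc u v') (LDc u v') lY lD j)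
    -- (iv) the conditional law of L_{A_D,j} depends only on a_D
    (hLDdens : ∀ (u u' v : Bool) (lY : ℕ → α) (lD : ℕ → β) (j : ℕ),
      LDdensF μ (Yc u v) (Dc u v) (LYc u v) (LDc u v) lY lD j =
        LDdensF μ (Yc u' v) (Dc u' v) (LYc u' v) (LDc u' v) lY lD j)
    (aY aD : Bool) :
    pr μ {ω | Yc aY aD (K + 1) ω = true} =
        gExpr μ K (Yc aY aD) (Dc aY aD) (LYc aY aD) (LDc aY aD)
          (Yc aY aD) (Dc aY aD) (LYc aY aD) (LDc aY aD) ∧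
      gExpr μ K (Yc aY aD) (Dc aY aD) (LYc aY aD) (LDc aY aD)
          (Yc aY aD) (Dc aY aD) (LYc aY aD) (LDc aY aD) =
        gExpr μ K (Yc aY aY) (Dc aY aY) (LYc aY aY) (LDc aY aY)
          (Yc aD aD) (Dc aD aD) (LYc aD aD) (LDc aD aD) := by
  refine ⟨pr_eq_gExpr K (hmY aY aD) (hmLY aY aD) (hmLD aY aD) (hY0 aY aD) (hD0 aY aD)
    (hYabs aY aD) (hDabs aY aD) (fun n ω hD hY => hcomp aY aD n ω hD hY _ n.lt_succ_self)
    (hpos aY aD), ?_⟩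
  -- The Y-survival factor is one minus the Y-hazard, so it too depends only on `a_Y`.
  have hYsurv (lY : ℕ → α) (lD : ℕ → β) (j : ℕ) (hj : j ≤ K + 1) :
      YsurvF μ (Yc aY aD) (Dc aY aD) (LYc aY aD) (LDc aY aD) lY lD j =
        YsurvF μ (Yc aY aY) (Dc aY aY) (LYc aY aY) (LDc aY aY) lY lD j := by
    cases j with
    | zero => rw [YsurvF_zero (hY0 aY aD) (hD0 aY aD), YsurvF_zero (hY0 aY aY) (hD0 aY aY)]
    | succ j =>
      rw [YsurvF_succ (hmY aY aD _) (hpos aY aD lY lD j (by omega)),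
        YsurvF_succ (hmY aY aY _) (hpos aY aY lY lD j (by omega)), hYhaz aY aD aY]
  unfold gExpr
  refine sum_congr rfl fun s hs => sum_congr rfl fun l _ => ?_
  rw [hYhaz aY aD aY]
  refine congrArg _ (prod_congr rfl fun j hj => ?_)
  have hjK : j ≤ K + 1 := by simp only [Finset.mem_range] at hs hj; omega
  rw [hDsurv aY aD aD, hYsurv _ _ j hjK, hLYdens aY aD aY, hLDdens aY aD aD]

/-- under the cross-world equalities (i)–(iv) of Lemma 1 — the Y-hazard
depends only on `a_Y`, the D-hazard only on `a_D`, the conditional law of `L_{A_Y,j}`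
only on `a_Y` and that of `L_{A_D,j}` only on `a_D` — the counterfactual cumulative
incidence `Pr(Y^{a_Y,a_D}_{K+1}=1)` equals its factorization with all factors in the
world `(a_Y, a_D)`, and this expression equals the same expression with the
Y-side factors evaluated at the single-arm counterfactual `a = a_Y` (world
`(a_Y, a_Y)`) and the D-side factors at `a = a_D` (world `(a_D, a_D)`). -/
theorem separable_effects_factor_swap
    {Ω α β : Type*} [MeasurableSpace Ω] [Fintype α] [Fintype β]
    (μ : Measure Ω) [IsProbabilityMeasure μ] (K : ℕ)
    (Yc Dc : Bool → Bool → ℕ → Ω → Bool)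
    (LYc : Bool → Bool → ℕ → Ω → α) (LDc : Bool → Bool → ℕ → Ω → β)
    (hmY : ∀ u v n, MeasurableSet {ω | Yc u v n ω = true})
    (hmD : ∀ u v n, MeasurableSet {ω | Dc u v n ω = true})
    (hmLY : ∀ u v n x, MeasurableSet {ω | LYc u v n ω = x})
    (hmLD : ∀ u v n x, MeasurableSet {ω | LDc u v n ω = x})
    (hY0 : ∀ u v ω, Yc u v 0 ω = false)
    (hD0 : ∀ u v ω, Dc u v 0 ω = false)
    (hYabs : ∀ u v n ω, Yc u v n ω = true → Yc u v (n + 1) ω = true)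
    (hDabs : ∀ u v n ω, Dc u v n ω = true → Dc u v (n + 1) ω = true)
    (hcomp : ∀ u v n ω, Dc u v (n + 1) ω = true → Yc u v n ω = false →
      ∀ j, n < j → Yc u v j ω = false)
    -- all conditioning events have positive probability
    (hpos : ∀ (u v : Bool) (lY : ℕ → α) (lD : ℕ → β) (j : ℕ), j ≤ K →
      0 < μ ({ω | Dc u v (j + 1) ω = false} ∩ {ω | Yc u v j ω = false} ∩
        covHist (LYc u v) (LDc u v) lY lD (j + 1)))
    -- (i) the Y-hazard depends only on a_Y and not a_D
    (hYhaz : ∀ (u v v' : Bool) (lY : ℕ → α) (lD : ℕ → β) (s : ℕ),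
      YhazF μ (Yc u v) (Dc u v) (LYc u v) (LDc u v) lY lD s =
        YhazF μ (Yc u v') (Dc u v') (LYc u v') (LDc u v') lY lD s)
    -- (ii) the D-hazard depends only on a_D and not a_Y
    (hDsurv : ∀ (u u' v : Bool) (lY : ℕ → α) (lD : ℕ → β) (j : ℕ),
      DsurvF μ (Yc u v) (Dc u v) (LYc u v) (LDc u v) lY lD j =
        DsurvF μ (Yc u' v) (Dc u' v) (LYc u' v) (LDc u' v) lY lD j)
    -- (iii) the conditional law of L_{A_Y,j} depends only on a_Y
    (hLYdens : ∀ (u v v' : Bool) (lY : ℕ → α) (lD : ℕ → β) (j : ℕ),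
      LYdensF μ (Yc u v) (Dc u v) (LYc u v) (LDc u v) lY lD j =
        LYdensF μ (Yc u v') (Dc u v') (LYc u v') (LDc u v') lY lD j)
    -- (iv) the conditional law of L_{A_D,j} depends only on a_D
    (hLDdens : ∀ (u u' v : Bool) (lY : ℕ → α) (lD : ℕ → β) (j : ℕ),
      LDdensF μ (Yc u v) (Dc u v) (LYc u v) (LDc u v) lY lD j =
        LDdensF μ (Yc u' v) (Dc u' v) (LYc u' v) (LDc u' v) lY lD j)
    (aY aD : Bool) :
    pr μ {ω | Yc aY aD (K + 1) ω = true} =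
        gExpr μ K (Yc aY aD) (Dc aY aD) (LYc aY aD) (LDc aY aD)
          (Yc aY aD) (Dc aY aD) (LYc aY aD) (LDc aY aD) ∧
      gExpr μ K (Yc aY aD) (Dc aY aD) (LYc aY aD) (LDc aY aD)
          (Yc aY aD) (Dc aY aD) (LYc aY aD) (LDc aY aD) =
        gExpr μ K (Yc aY aY) (Dc aY aY) (LYc aY aY) (LDc aY aY)
          (Yc aD aD) (Dc aD aD) (LYc aD aD) (LDc aD aD) :=
  separable_effects_factor_swap_general μ K Yc Dc LYc LDc hmY hmLY hmLD hY0 hD0 hYabs hDabs hcomp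
    hpos hYhaz hDsurv hLYdens hLDdens aY aD
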